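/- For N = 2^n and any real φ ∈ [0,1), after applying the inverse Fourier transform over Z_N to the state (1/√N) Σ_{k=0}^{N-1} e^{2πi k φ} |k⟩, the probability of measuring the basis state |m⟩, where m is the integer nearest to Nφ (mod N), is at least 4/π². -/

import Mathlib

open Complex Finset

lemma abs_exp_mul_I_sub_one' (θ : ℝ) :
    ‖Complex.exp (θ * I) - 1‖ = 2 * |Real.sin (θ / 2)| := by
  rw [Complex.exp_mul_I]
  have h1 : Complex.cos θ + Complex.sin θ * I - 1
      = Complex.mk (Real.cos θ - 1) (Real.sin θ) := by
    apply Complex.ext <;> simp [Complex.cos_ofReal_re, Complex.sin_ofReal_re]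
  rw [h1, Complex.norm_def, Complex.normSq_mk, Real.abs_sin_half]
  rw [show (Real.cos θ - 1) * (Real.cos θ - 1) + Real.sin θ * Real.sin θ
      = 2 * (1 - Real.cos θ) by
    have := Real.sin_sq_add_cos_sq θ; nlinarith]
  rw [show (2 : ℝ) * (1 - Real.cos θ) = 2 ^ 2 * ((1 - Real.cos θ) / 2) by ring]
  rw [Real.sqrt_mul (by positivity), Real.sqrt_sq (by norm_num)]

/-- For `N = 2^n` and real `φ ∈ [0,1)`, after applying the inverse Fourier transform
over `Z_N` to `(1/√N) Σ_k e^{2πi k φ} |k⟩`, the probability of measuring the basis state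
`|m⟩`, where `m` is the integer nearest to `Nφ` (mod `N`, expressed as `|Nφ - m| ≤ 1/2`
for an integer representative `m`), is at least `4/π²`. The amplitude at `m` is
`(1/N) Σ_k e^{2πik(φ - m/N)}`. -/
theorem stmt_1 (n : ℕ) (N : ℕ) (hN : N = 2 ^ n) (φ : ℝ) (hφ0 : 0 ≤ φ) (hφ1 : φ < 1)
    (m : ℤ) (hm : |(N : ℝ) * φ - m| ≤ 1 / 2) :
    4 / Real.pi ^ 2 ≤
      ‖(1 / N : ℂ) * ∑ k ∈ Finset.range N,
        Complex.exp (2 * Real.pi * I * k * (φ - (m : ℝ) / N))‖ ^ 2 := by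
  have hNpos : 0 < N := by rw [hN]; positivity
  have hNR : (0 : ℝ) < (N : ℝ) := by exact_mod_cast hNpos
  set δ : ℝ := φ - (m : ℝ) / N with hδ
  have hNδ : (N : ℝ) * δ = (N : ℝ) * φ - m := by rw [hδ]; field_simp
  have hm' : |(N : ℝ) * δ| ≤ 1 / 2 := by rw [hNδ]; exact hm
  have hpi := Real.pi_pos
  have hpisq : (4 : ℝ) ≤ Real.pi ^ 2 := by nlinarith [Real.pi_gt_three]
  have hc : (φ : ℂ) - ((m : ℝ) : ℂ) / (N : ℂ) = ((δ : ℝ) : ℂ) := by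
    rw [hδ]; push_cast; ring
  simp only [hc]
  clear_value δ
  by_cases hδ0 : δ = 0
  · simp only [hδ0, Complex.ofReal_zero, mul_zero, Complex.exp_zero, Finset.sum_const,
      Finset.card_range, nsmul_eq_mul, mul_one]
    rw [one_div, inv_mul_cancel₀ (by exact_mod_cast hNpos.ne')]
    rw [norm_one, one_pow]
    rw [div_le_one (by positivity)]
    exact hpisq
  -- rewrite terms as powers of z
  set z : ℂ := Complex.exp (2 * Real.pi * I * δ) with hz
  have hterm : ∀ k ∈ Finset.range N,
      Complex.exp (2 * Real.pi * I * k * (δ : ℝ)) = z ^ k := by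
    intro k _
    rw [hz, ← Complex.exp_nat_mul]
    ring_nf
  rw [Finset.sum_congr rfl hterm]
  have hδlt : |δ| < 1 := by
    have h1 : |(N:ℝ)| * |δ| ≤ 1/2 := by rw [← abs_mul]; exact hm'
    rw [abs_of_pos hNR] at h1
    have hN1 : (1:ℝ) ≤ N := by exact_mod_cast hNpos
    nlinarith [abs_nonneg δ]
  have hz1 : z ≠ 1 := by
    intro h
    rw [hz, Complex.exp_eq_one_iff] at h
    obtain ⟨j, hj⟩ := h
    have : (δ : ℂ) = (j : ℂ) := by
      have hI : (2 : ℂ) * Real.pi * I ≠ 0 := by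
        refine mul_ne_zero (mul_ne_zero two_ne_zero ?_) Complex.I_ne_zero
        exact_mod_cast Real.pi_ne_zero
      have : (δ : ℂ) * (2 * Real.pi * I) = (j : ℂ) * (2 * Real.pi * I) := by
        rw [← hj]; ring
      exact mul_right_cancel₀ hI this
    have hδj : δ = (j : ℝ) := by exact_mod_cast this
    have hj0 : j ≠ 0 := by rintro rfl; exact hδ0 (by exact_mod_cast hδj)
    have : (1 : ℝ) ≤ |δ| := by
      rw [hδj]; exact_mod_cast Int.one_le_abs hj0
    linarith
  rw [geom_sum_eq hz1]
  have hzN : z ^ N = Complex.exp (2 * Real.pi * I * ((N : ℝ) * δ)) := by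
    rw [hz, ← Complex.exp_nat_mul]; congr 1; push_cast; ring
  -- norms
  have habs1 : ‖z ^ N - 1‖ = 2 * |Real.sin (Real.pi * ((N:ℝ) * δ))| := by
    rw [hzN, show (2 : ℂ) * Real.pi * I * ((N : ℝ) * δ)
        = ((2 * Real.pi * ((N:ℝ) * δ) : ℝ) : ℂ) * I by push_cast; ring,
      abs_exp_mul_I_sub_one']
    congr 2
    ring
  have habs2 : ‖z - 1‖ = 2 * |Real.sin (Real.pi * δ)| := by
    rw [hz, show (2 : ℂ) * Real.pi * I * δ = ((2 * Real.pi * δ : ℝ) : ℂ) * I by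
      push_cast; ring, abs_exp_mul_I_sub_one']
    congr 2
    ring
  have hs2pos : 0 < |Real.sin (Real.pi * δ)| := by
    have h1 : ‖z - 1‖ ≠ 0 := by
      simp [sub_eq_zero, hz1]
    rw [habs2] at h1
    have h2 : |Real.sin (Real.pi * δ)| ≠ 0 := by
      intro h; exact h1 (by rw [h, mul_zero])
    exact lt_of_le_of_ne (abs_nonneg _) (Ne.symm h2)
  -- lower bound on numerator sine
  have hnum : 2 * |(N:ℝ) * δ| ≤ |Real.sin (Real.pi * ((N:ℝ) * δ))| := by
    have h := Real.mul_abs_le_abs_sin (x := Real.pi * ((N:ℝ) * δ)) ?_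
    · calc 2 * |(N:ℝ) * δ| = 2 / Real.pi * (Real.pi * |(N:ℝ)*δ|) := by
            field_simp
        _ = 2 / Real.pi * |Real.pi * ((N:ℝ)*δ)| := by
            rw [abs_mul Real.pi ((N:ℝ)*δ), abs_of_pos hpi]
        _ ≤ _ := h
    · rw [abs_mul, abs_of_pos hpi]
      calc Real.pi * |(N:ℝ)*δ| ≤ Real.pi * (1/2) := by
            exact mul_le_mul_of_nonneg_left hm' hpi.le
        _ = Real.pi / 2 := by ring
  -- upper bound on denominator sine
  have hden : |Real.sin (Real.pi * δ)| ≤ Real.pi * |δ| := by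
    calc |Real.sin (Real.pi * δ)| ≤ |Real.pi * δ| := Real.abs_sin_le_abs
      _ = Real.pi * |δ| := by rw [abs_mul, abs_of_pos hpi]
  have hδabs : 0 < |δ| := abs_pos.mpr hδ0
  -- compute the norm
  have hnorm : ‖(1 / N : ℂ) * ((z ^ N - 1) / (z - 1))‖
      = |Real.sin (Real.pi * ((N:ℝ) * δ))| / ((N:ℝ) * |Real.sin (Real.pi * δ)|) := by
    rw [norm_mul, norm_div, norm_div, norm_one, Complex.norm_natCast,
      habs1, habs2]
    field_simp
  rw [hnorm]
  -- final inequality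
  have hfin : 2 / Real.pi ≤
      |Real.sin (Real.pi * ((N:ℝ) * δ))| / ((N:ℝ) * |Real.sin (Real.pi * δ)|) := by
    rw [div_le_div_iff₀ hpi (by positivity)]
    calc 2 * ((N:ℝ) * |Real.sin (Real.pi * δ)|)
        ≤ 2 * ((N:ℝ) * (Real.pi * |δ|)) := by
          have := mul_le_mul_of_nonneg_left hden hNR.le
          nlinarith
      _ = (2 * |(N:ℝ) * δ|) * Real.pi := by
          rw [abs_mul, abs_of_pos hNR]; ring
      _ ≤ |Real.sin (Real.pi * ((N:ℝ) * δ))| * Real.pi :=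
          mul_le_mul_of_nonneg_right hnum hpi.le
  have h2pi : (0:ℝ) ≤ 2 / Real.pi := by positivity
  calc 4 / Real.pi ^ 2 = (2 / Real.pi) ^ 2 := by rw [div_pow]; norm_num
    _ ≤ _ := pow_le_pow_left₀ h2pi hfin 2
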